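/- For all u, v ∈ ℂ: A(u,v) = A(u)C(v) − A(v)C(u); B(u,v) = B(u)C(v) − A(v)D(u); C(u,v) = A(u)D(v) − B(v)C(u); D(u,v) = B(u)D(v) − B(v)D(u). -/

import Mathlib

open Filter Topology MeasureTheory

noncomputable section

/-- Action of the Jacobi matrix `J` on a complex sequence:
`(Jc)ₙ = aₙ₋₁cₙ₋₁ + bₙcₙ + aₙcₙ₊₁` with `a₋₁ := 0`. -/
def jacobiMul (a b : ℕ → ℝ) (c : ℕ → ℂ) : ℕ → ℂ
  | 0 => (b 0 : ℂ) * c 0 + (a 0 : ℂ) * c 1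
  | n + 1 => (a n : ℂ) * c n + (b (n + 1) : ℂ) * c (n + 1) + (a (n + 1) : ℂ) * c (n + 2)

/-- `jacobiGraph a b f g` means: `f` belongs to the domain `D(T)` of the closure `T` of the
Jacobi matrix acting on the finitely supported sequences, and `T f = g`; i.e. there are
finitely supported sequences `u k → f` in `ℓ²` such that `J (u k) → g` in `ℓ²`. -/
def jacobiGraph (a b : ℕ → ℝ) (f g : ℕ → ℂ) : Prop :=
  ∃ u : ℕ → ℕ → ℂ,
    (∀ k, (Function.support (u k)).Finite) ∧
    (∀ k, Summable fun n => ‖u k n - f n‖ ^ 2) ∧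
    Tendsto (fun k => ∑' n, ‖u k n - f n‖ ^ 2) atTop (𝓝 0) ∧
    (∀ k, Summable fun n => ‖jacobiMul a b (u k) n - g n‖ ^ 2) ∧
    Tendsto (fun k => ∑' n, ‖jacobiMul a b (u k) n - g n‖ ^ 2) atTop (𝓝 0)

/-- Membership in the domain `D(T)` of the Jacobi operator. -/
def inDomT (a b : ℕ → ℝ) (f : ℕ → ℂ) : Prop := ∃ g, jacobiGraph a b f g

/-- The `ℓ²` norm of a complex sequence. -/
def l2norm (f : ℕ → ℂ) : ℝ := Real.sqrt (∑' n, ‖f n‖ ^ 2)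

/-- The data of an indeterminate Hamburger moment problem: Jacobi parameters `a`, `b`,
the orthonormal polynomials `p` and second-kind polynomials `q` (as entire functions),
determined by the three-term recurrence, together with the indeterminacy condition
`∑ₙ (|pₙ(z)|² + |qₙ(z)|²) < ∞` for all `z`. -/
structure JacobiSetup where
  a : ℕ → ℝ
  b : ℕ → ℝ
  ha : ∀ n, 0 < a n
  p : ℕ → ℂ → ℂ
  q : ℕ → ℂ → ℂ
  hp0 : ∀ z, p 0 z = 1
  hp1 : ∀ z, p 1 z = (z - (b 0 : ℂ)) / (a 0 : ℂ)
  hq0 : ∀ z, q 0 z = 0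
  hq1 : ∀ z, q 1 z = 1 / (a 0 : ℂ)
  hrecp : ∀ n z, z * p (n + 1) z =
    (a (n + 1) : ℂ) * p (n + 2) z + (b (n + 1) : ℂ) * p (n + 1) z + (a n : ℂ) * p n z
  hrecq : ∀ n z, z * q (n + 1) z =
    (a (n + 1) : ℂ) * q (n + 2) z + (b (n + 1) : ℂ) * q (n + 1) z + (a n : ℂ) * q n z
  indet : ∀ z : ℂ, Summable fun n => ‖p n z‖ ^ 2 + ‖q n z‖ ^ 2

/-- The Nevanlinna function `A(u,v)`. -/
def nevA (S : JacobiSetup) (u v : ℂ) : ℂ := (u - v) * ∑' k, S.q k u * S.q k v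
/-- The Nevanlinna function `B(u,v)`. -/
def nevB (S : JacobiSetup) (u v : ℂ) : ℂ := -1 + (u - v) * ∑' k, S.p k u * S.q k v
/-- The Nevanlinna function `C(u,v)`. -/
def nevC (S : JacobiSetup) (u v : ℂ) : ℂ := 1 + (u - v) * ∑' k, S.q k u * S.p k v
/-- The Nevanlinna function `D(u,v)`. -/
def nevD (S : JacobiSetup) (u v : ℂ) : ℂ := (u - v) * ∑' k, S.p k u * S.p k v

/-!
Each of `p(u), q(u)` is a formal eigenvector of the Jacobi matrix `J` for the eigenvalue `u`,
except in row `0`. Summation by parts (Green's formula) turns `(u - v) ∑ₖ₌₀ⁿ fₖ(u) gₖ(v)` into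
the Wronskian `Wₙ(f, g) = aₙ (fₙ₊₁ gₙ - fₙ gₙ₊₁)` plus a boundary term from row `0`, so the
Wronskians of `p` and `q` converge to `A, B, C, D`. The Wronskian at a fixed `n` is a `2 × 2`
determinant, and the Plücker relation between the four vectors `x(u), y(v), p(0), q(0)`
passes to the limit, where `Wₙ(p(0), q(0)) → B(0, 0) = -1`.
-/

def wronskian (a : ℕ → ℝ) (f g : ℕ → ℂ) (n : ℕ) : ℂ :=
  (a n : ℂ) * (f (n + 1) * g n - f n * g (n + 1))

theorem wronskian_mul_wronskian (a : ℕ → ℝ) (x y z w : ℕ → ℂ) (n : ℕ) :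
    wronskian a x y n * wronskian a z w n =
      wronskian a x z n * wronskian a y w n - wronskian a x w n * wronskian a y z n := by
  simp only [wronskian]
  ring

theorem eq_of_tendsto_wronskian {a : ℕ → ℝ} {x y z w : ℕ → ℂ} {α β γ δ ε : ℂ}
    (hxy : Tendsto (wronskian a x y) atTop (𝓝 α))
    (hzw : Tendsto (wronskian a z w) atTop (𝓝 (-1)))
    (hxz : Tendsto (wronskian a x z) atTop (𝓝 β))
    (hyw : Tendsto (wronskian a y w) atTop (𝓝 γ))
    (hxw : Tendsto (wronskian a x w) atTop (𝓝 δ))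
    (hyz : Tendsto (wronskian a y z) atTop (𝓝 ε)) :
    α = δ * ε - γ * β := by
  have key : α * -1 = β * γ - δ * ε :=
    tendsto_nhds_unique (hxy.mul hzw)
      (((hxz.mul hyw).sub (hxw.mul hyz)).congr fun n =>
        (wronskian_mul_wronskian a x y z w n).symm)
  linear_combination -key

section Green

variable {a b : ℕ → ℝ} {u v cf cg : ℂ} {f g : ℕ → ℂ}

theorem sub_mul_sum_range_eq_wronskian
    (hf0 : u * f 0 - jacobiMul a b f 0 = cf) (hg0 : v * g 0 - jacobiMul a b g 0 = cg)
    (hf : ∀ n, jacobiMul a b f (n + 1) = u * f (n + 1))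
    (hg : ∀ n, jacobiMul a b g (n + 1) = v * g (n + 1)) (n : ℕ) :
    (u - v) * ∑ k ∈ Finset.range (n + 1), f k * g k
      = wronskian a f g n + (cf * g 0 - f 0 * cg) := by
  induction n with
  | zero =>
    simp only [jacobiMul] at hf0 hg0
    simp only [zero_add, Finset.sum_range_one, wronskian]
    linear_combination g 0 * hf0 - f 0 * hg0
  | succ n ih =>
    have hfn := hf n
    have hgn := hg n
    simp only [jacobiMul] at hfn hgn
    rw [Finset.sum_range_succ]
    simp only [wronskian] at ih ⊢
    linear_combination ih - g (n + 1) * hfn + f (n + 1) * hgn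

theorem tendsto_wronskian
    (hf0 : u * f 0 - jacobiMul a b f 0 = cf) (hg0 : v * g 0 - jacobiMul a b g 0 = cg)
    (hf : ∀ n, jacobiMul a b f (n + 1) = u * f (n + 1))
    (hg : ∀ n, jacobiMul a b g (n + 1) = v * g (n + 1))
    (hfg : Summable fun k => f k * g k) :
    Tendsto (wronskian a f g) atTop
      (𝓝 ((u - v) * ∑' k, f k * g k - (cf * g 0 - f 0 * cg))) := by
  have hsum : Tendsto (fun n => ∑ k ∈ Finset.range (n + 1), f k * g k) atTop
      (𝓝 (∑' k, f k * g k)) :=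
    hfg.hasSum.tendsto_sum_nat.comp (tendsto_add_atTop_nat 1)
  refine ((hsum.const_mul (u - v)).sub_const (cf * g 0 - f 0 * cg)).congr fun n => ?_
  rw [sub_mul_sum_range_eq_wronskian hf0 hg0 hf hg n]
  ring

end Green

theorem summable_mul_of_summable_norm_sq {f g : ℕ → ℂ}
    (hf : Summable fun n => ‖f n‖ ^ 2) (hg : Summable fun n => ‖g n‖ ^ 2) :
    Summable fun n => f n * g n := by
  refine Summable.of_norm_bounded ((hf.add hg).div_const 2) fun n => ?_
  rw [norm_mul]
  nlinarith [two_mul_le_add_sq ‖f n‖ ‖g n‖]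

namespace JacobiSetup

variable (S : JacobiSetup) (z : ℂ)

theorem summable_norm_p_sq : Summable fun n => ‖S.p n z‖ ^ 2 :=
  (S.indet z).of_nonneg_of_le (fun _ => by positivity) fun _ =>
    le_add_of_nonneg_right (by positivity)

theorem summable_norm_q_sq : Summable fun n => ‖S.q n z‖ ^ 2 :=
  (S.indet z).of_nonneg_of_le (fun _ => by positivity) fun _ =>
    le_add_of_nonneg_left (by positivity)

theorem jacobiMul_p_succ (n : ℕ) :
    jacobiMul S.a S.b (S.p · z) (n + 1) = z * S.p (n + 1) z := by
  rw [jacobiMul, S.hrecp]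
  ring

theorem jacobiMul_q_succ (n : ℕ) :
    jacobiMul S.a S.b (S.q · z) (n + 1) = z * S.q (n + 1) z := by
  rw [jacobiMul, S.hrecq]
  ring

theorem a_zero_ne_zero : (S.a 0 : ℂ) ≠ 0 :=
  Complex.ofReal_ne_zero.mpr (S.ha 0).ne'

theorem p_zero_defect : z * S.p 0 z - jacobiMul S.a S.b (S.p · z) 0 = 0 := by
  simp only [jacobiMul, S.hp0, S.hp1]
  field_simp [S.a_zero_ne_zero]
  ring

theorem q_zero_defect : z * S.q 0 z - jacobiMul S.a S.b (S.q · z) 0 = -1 := by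
  simp only [jacobiMul, S.hq0, S.hq1]
  field_simp [S.a_zero_ne_zero]
  ring

variable (u v : ℂ)

theorem tendsto_wronskian_q_q :
    Tendsto (wronskian S.a (S.q · u) (S.q · v)) atTop (𝓝 (nevA S u v)) := by
  have h := tendsto_wronskian (S.q_zero_defect u) (S.q_zero_defect v)
    (S.jacobiMul_q_succ u) (S.jacobiMul_q_succ v)
    (summable_mul_of_summable_norm_sq (S.summable_norm_q_sq u) (S.summable_norm_q_sq v))
  simpa [nevA, S.hq0] using h

theorem tendsto_wronskian_p_q :
    Tendsto (wronskian S.a (S.p · u) (S.q · v)) atTop (𝓝 (nevB S u v)) := by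
  have h := tendsto_wronskian (S.p_zero_defect u) (S.q_zero_defect v)
    (S.jacobiMul_p_succ u) (S.jacobiMul_q_succ v)
    (summable_mul_of_summable_norm_sq (S.summable_norm_p_sq u) (S.summable_norm_q_sq v))
  convert h using 2
  rw [nevB, S.hp0]
  ring

theorem tendsto_wronskian_q_p :
    Tendsto (wronskian S.a (S.q · u) (S.p · v)) atTop (𝓝 (nevC S u v)) := by
  have h := tendsto_wronskian (S.q_zero_defect u) (S.p_zero_defect v)
    (S.jacobiMul_q_succ u) (S.jacobiMul_p_succ v)
    (summable_mul_of_summable_norm_sq (S.summable_norm_q_sq u) (S.summable_norm_p_sq v))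
  convert h using 2
  rw [nevC, S.hp0]
  ring

theorem tendsto_wronskian_p_p :
    Tendsto (wronskian S.a (S.p · u) (S.p · v)) atTop (𝓝 (nevD S u v)) := by
  have h := tendsto_wronskian (S.p_zero_defect u) (S.p_zero_defect v)
    (S.jacobiMul_p_succ u) (S.jacobiMul_p_succ v)
    (summable_mul_of_summable_norm_sq (S.summable_norm_p_sq u) (S.summable_norm_p_sq v))
  simpa [nevD] using h

theorem tendsto_wronskian_p_zero_q_zero :
    Tendsto (wronskian S.a (S.p · 0) (S.q · 0)) atTop (𝓝 (-1)) := by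
  simpa [nevB] using S.tendsto_wronskian_p_q 0 0

end JacobiSetup

/-- The two-variable Nevanlinna functions in terms of the one-variable ones
(`A(u) := A(u,0)` etc.). -/
theorem stmt18 (S : JacobiSetup) (u v : ℂ) :
    nevA S u v = nevA S u 0 * nevC S v 0 - nevA S v 0 * nevC S u 0 ∧
    nevB S u v = nevB S u 0 * nevC S v 0 - nevA S v 0 * nevD S u 0 ∧
    nevC S u v = nevA S u 0 * nevD S v 0 - nevB S v 0 * nevC S u 0 ∧
    nevD S u v = nevB S u 0 * nevD S v 0 - nevB S v 0 * nevD S u 0 := by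
  have W₀ := S.tendsto_wronskian_p_zero_q_zero
  exact ⟨eq_of_tendsto_wronskian (S.tendsto_wronskian_q_q u v) W₀
      (S.tendsto_wronskian_q_p u 0) (S.tendsto_wronskian_q_q v 0)
      (S.tendsto_wronskian_q_q u 0) (S.tendsto_wronskian_q_p v 0),
    eq_of_tendsto_wronskian (S.tendsto_wronskian_p_q u v) W₀
      (S.tendsto_wronskian_p_p u 0) (S.tendsto_wronskian_q_q v 0)
      (S.tendsto_wronskian_p_q u 0) (S.tendsto_wronskian_q_p v 0),
    eq_of_tendsto_wronskian (S.tendsto_wronskian_q_p u v) W₀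
      (S.tendsto_wronskian_q_p u 0) (S.tendsto_wronskian_p_q v 0)
      (S.tendsto_wronskian_q_q u 0) (S.tendsto_wronskian_p_p v 0),
    eq_of_tendsto_wronskian (S.tendsto_wronskian_p_p u v) W₀
      (S.tendsto_wronskian_p_p u 0) (S.tendsto_wronskian_p_q v 0)
      (S.tendsto_wronskian_p_q u 0) (S.tendsto_wronskian_p_p v 0)⟩
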